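/- arXiv:1001.3403 — 3 statements merged into one kernel-verified Lean document; each statement's English description precedes it below -/
import Mathlib

section
/- Khintchine–Groshev theorem (convergence part): Let m ≥ 1 be an integer and ε > 0. The set of vectors v ∈ ℝ^m for which there exist infinitely many q ∈ ℤ^m \ {0} such that for some p ∈ ℤ one has |p + v·q| < (max_{1≤i≤m} |q_i|)^{-(m+ε)} has Lebesgue measure zero. -/
/-!
Borel–Cantelli. Fix a radius `N`. If `q ≠ 0` and `|q i₀| = ‖q‖` is its largest coordinate, the
linear map replacing `v i₀` by `∑ i, v i * q i` has determinant `q i₀`; it maps the points `v` of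
the ball of radius `N` with `|p + ∑ i, v i * q i| < δ` for some `p : ℤ` into a product of balls
with one factor replaced by at most `2 m N ‖q‖ + 1` intervals of length `2δ`. Dividing by the
determinant, these points have measure `O_N(δ)`, uniformly in `q`. With `δ = ‖q‖ ^ (-(m + ε))`
the measures are summable over `ℤ^m`, since the lattice `p`-series converges for exponents
beyond the rank.
-/

open MeasureTheory Metric Filter

theorem Matrix.det_one_updateRow {ι R : Type*} [Fintype ι] [DecidableEq ι] [CommRing R]
    (i₀ : ι) (c : ι → R) : ((1 : Matrix ι ι R).updateRow i₀ c).det = c i₀ := by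
  conv_lhs => rw [show c = ∑ k, c k • (1 : Matrix ι ι R) k by ext; simp [Matrix.one_apply]]
  simp [Matrix.det_updateRow_sum]

theorem exists_linearMap_det_eq_apply_eq_update_sum_mul {ι : Type*} [Fintype ι] [DecidableEq ι]
    (i₀ : ι) (c : ι → ℝ) :
    ∃ T : (ι → ℝ) →ₗ[ℝ] ι → ℝ, LinearMap.det T = c i₀ ∧
      ∀ v, T v = Function.update v i₀ (∑ i, v i * c i) := by
  refine ⟨Matrix.toLin' ((1 : Matrix ι ι ℝ).updateRow i₀ c), ?_, fun v => ?_⟩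
  · rw [LinearMap.det_toLin', Matrix.det_one_updateRow]
  · simp [Matrix.updateRow_mulVec, dotProduct, mul_comm]

theorem Real.volume_pi_update_ball {ι : Type*} [Fintype ι] [DecidableEq ι] (i₀ : ι) (E : Set ℝ)
    (x r : ℝ) :
    volume (Set.univ.pi (Function.update (fun _ => ball x r) i₀ E)) =
      volume E * ENNReal.ofReal (2 * r) ^ (Fintype.card ι - 1) := by
  have hfactor : (fun i => volume (Function.update (fun _ => ball x r) i₀ E i)) =
      Function.update (fun _ => volume (ball x r)) i₀ (volume E) := by
    ext i
    rcases eq_or_ne i i₀ with rfl | hi <;> simp [*]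
  rw [volume_pi_pi, hfactor, Finset.prod_update_of_mem (Finset.mem_univ i₀), Finset.prod_const,
    Real.volume_ball, Finset.card_univ_sdiff, Finset.card_singleton]

theorem Real.volume_closedBall_inter_setOf_exists_int_abs_add_lt_le (R : ℕ) {δ : ℝ}
    (hδ : δ ≤ 1) :
    volume (closedBall (0 : ℝ) R ∩ {x | ∃ p : ℤ, |p + x| < δ}) ≤
      (2 * R + 1 : ℕ) * ENNReal.ofReal (2 * δ) := by
  have hsub : closedBall (0 : ℝ) R ∩ {x | ∃ p : ℤ, |p + x| < δ} ⊆
      ⋃ p ∈ Finset.Icc (-(R : ℤ)) R, ball (-(p : ℝ)) δ := by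
    rintro x ⟨hx, p, hp⟩
    rw [mem_closedBall_zero_iff, Real.norm_eq_abs] at hx
    have hpR : |(p : ℝ)| < R + 1 := by
      calc |(p : ℝ)| ≤ |p + x| + |x| := by simpa using abs_sub (p + x : ℝ) x
        _ < R + 1 := by linarith
    refine Set.mem_biUnion (x := p) ?_ ?_
    · rw [Finset.coe_Icc, Set.mem_Icc, ← abs_le]
      exact_mod_cast Int.lt_add_one_iff.mp (by exact_mod_cast hpR)
    · rwa [mem_ball, Real.dist_eq, sub_neg_eq_add, add_comm]
  calc _ ≤ _ := measure_mono hsub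
    _ ≤ ∑ p ∈ Finset.Icc (-(R : ℤ)) R, volume (ball (-(p : ℝ)) δ) := measure_biUnion_finset_le _ _
    _ = (2 * R + 1 : ℕ) * ENNReal.ofReal (2 * δ) := by
      simp only [Real.volume_ball, Finset.sum_const, Int.card_Icc, nsmul_eq_mul]
      congr
      omega

section

variable {ι : Type*} [Fintype ι]

theorem Pi.norm_int_eq_sup_natAbs (q : ι → ℤ) :
    ‖q‖ = ((Finset.univ.sup fun i => (q i).natAbs : ℕ) : ℝ) := by
  simp only [Pi.norm_def, ← NNReal.coe_natCast, Nat.cast_finsetSup, NNReal.natCast_natAbs]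

theorem Pi.one_le_norm_int {q : ι → ℤ} (hq : q ≠ 0) : 1 ≤ ‖q‖ := by
  obtain ⟨j, hj⟩ := Function.ne_iff.mp hq
  calc (1 : ℝ) ≤ |(q j : ℝ)| := by exact_mod_cast Int.one_le_abs hj
    _ = ‖q j‖ := (Int.norm_eq_abs _).symm
    _ ≤ ‖q‖ := norm_le_pi_norm q j

theorem Pi.summable_norm_int_rpow {r : ℝ} (hr : r < -Fintype.card ι) :
    Summable fun q : ι → ℤ => ‖q‖ ^ r := by
  classical
  let b := Pi.basisFun ℝ ι
  let bℤ := b.restrictScalars ℤ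
  have hL := ZLattice.summable_norm_rpow (Submodule.span ℤ (Set.range b)) r
    (by rwa [Module.finrank_eq_card_basis bℤ])
  refine (hL.comp_injective bℤ.equivFun.symm.injective).congr fun q => ?_
  have hcoe : (bℤ.equivFun.symm q : ι → ℝ) = fun i => (q i : ℝ) := by
    ext i
    simp [bℤ, b, Module.Basis.equivFun_symm_apply, Pi.single_apply]
  rw [Function.comp_apply, Submodule.coe_norm, hcoe]
  rfl

theorem abs_sum_mul_intCast_le {v : ι → ℝ} {q : ι → ℤ} {a : ℝ} {b : ℕ}
    (hv : ∀ i, |v i| ≤ a) (hq : ∀ i, (q i).natAbs ≤ b) :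
    |∑ i, v i * q i| ≤ (Fintype.card ι * a * b : ℝ) := by
  calc |∑ i, v i * q i| ≤ ∑ i, |v i| * |(q i : ℝ)| := by
        simpa only [abs_mul] using Finset.abs_sum_le_sum_abs (fun i => v i * q i) Finset.univ
    _ ≤ ∑ _i : ι, a * b := by
        gcongr with i
        · exact (abs_nonneg _).trans (hv i)
        · exact hv i
        · rw [← Int.cast_abs, Int.abs_eq_natAbs]; exact_mod_cast hq i
    _ = Fintype.card ι * a * b := by simp [mul_assoc]

theorem volume_ball_inter_setOf_exists_int_abs_add_sum_lt_le (N : ℕ) {q : ι → ℤ} (hq : q ≠ 0)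
    {δ : ℝ} (hδ : δ ≤ 1) :
    volume (ball (0 : ι → ℝ) N ∩ {v | ∃ p : ℤ, |p + ∑ i, v i * q i| < δ}) ≤
      ((2 * Fintype.card ι * N + 1) * (2 * N) ^ (Fintype.card ι - 1) : ℕ) *
        ENNReal.ofReal (2 * δ) := by
  classical
  obtain ⟨j, hj⟩ := Function.ne_iff.mp hq
  obtain ⟨i₀, -, hi₀⟩ := Finset.exists_max_image Finset.univ (fun i => (q i).natAbs) ⟨j, by simp⟩
  set Q := (q i₀).natAbs
  have hQ : 0 < Q := (Int.natAbs_pos.mpr hj).trans_le (hi₀ j (by simp))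
  obtain ⟨T, hdet, hT⟩ := exists_linearMap_det_eq_apply_eq_update_sum_mul i₀ fun i => (q i : ℝ)
  set R := Fintype.card ι * N * Q
  set E := closedBall (0 : ℝ) R ∩ {x | ∃ p : ℤ, |p + x| < δ}
  have hsub : ball (0 : ι → ℝ) N ∩ {v | ∃ p : ℤ, |p + ∑ i, v i * q i| < δ} ⊆
      T ⁻¹' Set.univ.pi (Function.update (fun _ => ball (0 : ℝ) N) i₀ E) := by
    rintro v ⟨hv, hp⟩
    have hvi (i : ι) : ‖v i‖ < N := (norm_le_pi_norm v i).trans_lt (mem_ball_zero_iff.mp hv)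
    rw [Set.mem_preimage, hT, Set.update_mem_pi_iff]
    refine ⟨fun i hi => ?_, fun _ => ?_⟩
    · rw [Function.update_of_ne (by simpa using hi)]
      exact mem_ball_zero_iff.mpr (hvi i)
    · rw [Function.update_self, Set.mem_inter_iff, mem_closedBall_zero_iff, Real.norm_eq_abs]
      refine ⟨?_, hp⟩
      exact_mod_cast abs_sum_mul_intCast_le (fun i => (hvi i).le) fun i => hi₀ i (by simp)
  have hdet_abs : ENNReal.ofReal |(LinearMap.det T)⁻¹| = (Q : ENNReal)⁻¹ := by
    rw [hdet, abs_inv, ← Int.cast_abs, ← Nat.cast_natAbs,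
      ENNReal.ofReal_inv_of_pos (by positivity), ENNReal.ofReal_natCast]
  have hcount : (Q : ENNReal)⁻¹ * (2 * R + 1 : ℕ) ≤ (2 * Fintype.card ι * N + 1 : ℕ) := by
    rw [ENNReal.inv_mul_le_iff (by positivity) (ENNReal.natCast_ne_top _)]
    exact_mod_cast (by simp only [R]; nlinarith : 2 * R + 1 ≤ Q * (2 * Fintype.card ι * N + 1))
  have hball : ENNReal.ofReal (2 * N) = (2 * N : ℕ) := by
    rw [← ENNReal.ofReal_natCast]; push_cast; rfl
  calc _ ≤ _ := measure_mono hsub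
    _ = (Q : ENNReal)⁻¹ * (volume E * ENNReal.ofReal (2 * N) ^ (Fintype.card ι - 1)) := by
      rw [Measure.addHaar_preimage_linearMap _ (by simpa [hdet] using Int.natAbs_pos.mp hQ),
        hdet_abs, Real.volume_pi_update_ball]
    _ ≤ (Q : ENNReal)⁻¹ * ((2 * R + 1 : ℕ) * ENNReal.ofReal (2 * δ) *
        ENNReal.ofReal (2 * N) ^ (Fintype.card ι - 1)) := by
      gcongr
      exact Real.volume_closedBall_inter_setOf_exists_int_abs_add_lt_le R hδ
    _ = (Q : ENNReal)⁻¹ * (2 * R + 1 : ℕ) * ((2 * N) ^ (Fintype.card ι - 1) : ℕ) *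
        ENNReal.ofReal (2 * δ) := by
      rw [hball]
      push_cast
      ring
    _ ≤ (2 * Fintype.card ι * N + 1 : ℕ) * ((2 * N) ^ (Fintype.card ι - 1) : ℕ) *
        ENNReal.ofReal (2 * δ) := by gcongr
    _ = _ := by push_cast; ring

theorem khintchine_groshev_convergence_of_summable {ψ : (ι → ℤ) → ℝ} (hψ : Summable ψ)
    (hψ_le : ∀ q, q ≠ 0 → ψ q ≤ 1) :
    volume {v : ι → ℝ |
      {q : ι → ℤ | q ≠ 0 ∧ ∃ p : ℤ, |(p : ℝ) + ∑ i, v i * (q i : ℝ)| < ψ q}.Infinite} = 0 := by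
  set W := {v : ι → ℝ |
    {q : ι → ℤ | q ≠ 0 ∧ ∃ p : ℤ, |(p : ℝ) + ∑ i, v i * (q i : ℝ)| < ψ q}.Infinite}
  rw [← Set.univ_inter W, ← iUnion_ball_nat 0, Set.iUnion_inter]
  refine measure_iUnion_null fun N => ?_
  set A : (ι → ℤ) → Set (ι → ℝ) := fun q =>
    {v ∈ ball 0 N | q ≠ 0 ∧ ∃ p : ℤ, |(p : ℝ) + ∑ i, v i * (q i : ℝ)| < ψ q}
  have hW : ball 0 N ∩ W ⊆ limsup A cofinite := fun v ⟨hv, hinf⟩ => by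
    rw [mem_limsup_iff_frequently_mem, frequently_cofinite_iff_infinite]
    exact hinf.mono fun q hq => ⟨hv, hq⟩
  set C : ℕ := (2 * Fintype.card ι * N + 1) * (2 * N) ^ (Fintype.card ι - 1)
  have hA (q : ι → ℤ) : volume (A q) ≤ C * ENNReal.ofReal (2 * ψ q) := by
    rcases eq_or_ne q 0 with rfl | hq
    · simp [A]
    calc volume (A q)
        ≤ volume (ball (0 : ι → ℝ) N ∩ {v | ∃ p : ℤ, |p + ∑ i, v i * q i| < ψ q}) :=
          measure_mono fun v hv => ⟨hv.1, hv.2.2⟩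
      _ ≤ _ := volume_ball_inter_setOf_exists_int_abs_add_sum_lt_le N hq (hψ_le q hq)
  refine measure_mono_null hW (measure_limsup_cofinite_eq_zero ?_)
  refine ne_top_of_le_ne_top ?_ (ENNReal.tsum_le_tsum hA)
  rw [ENNReal.tsum_mul_left]
  exact ENNReal.mul_ne_top (ENNReal.natCast_ne_top C)
    (ENNReal.tsum_coe_ne_top_iff_summable.mpr (hψ.mul_left 2).toNNReal)

end

theorem khintchine_groshev_convergence_general (m : ℕ) (ε : ℝ) (hε : 0 < ε) :
    volume {v : Fin m → ℝ |
      {q : Fin m → ℤ | q ≠ 0 ∧ ∃ p : ℤ,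
        |(p : ℝ) + ∑ i, v i * (q i : ℝ)| <
          ((Finset.univ.sup fun i => (q i).natAbs : ℕ) : ℝ) ^ (-((m : ℝ) + ε))}.Infinite}
      = 0 := by
  simp_rw [← Pi.norm_int_eq_sup_natAbs]
  refine khintchine_groshev_convergence_of_summable
    (Pi.summable_norm_int_rpow (by simp [hε])) fun q hq => ?_
  exact Real.rpow_le_one_of_one_le_of_nonpos (Pi.one_le_norm_int hq) (by linarith)

/-- Khintchine–Groshev theorem (convergence part): for `m ≥ 1` and `ε > 0`, the set of
`v ∈ ℝ^m` admitting infinitely many `q ∈ ℤ^m \ {0}` such that for some `p ∈ ℤ`,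
`|p + v·q| < Q^{-(m+ε)}` (with `Q` the sup-norm of `q`) has Lebesgue measure zero. -/
theorem khintchine_groshev_convergence (m : ℕ) (hm : 1 ≤ m) (ε : ℝ) (hε : 0 < ε) :
    volume {v : Fin m → ℝ |
      {q : Fin m → ℤ | q ≠ 0 ∧ ∃ p : ℤ,
        |(p : ℝ) + ∑ i, v i * (q i : ℝ)| <
          ((Finset.univ.sup fun i => (q i).natAbs : ℕ) : ℝ) ^ (-((m : ℝ) + ε))}.Infinite}
      = 0 :=
  khintchine_groshev_convergence_general m ε hε
end

section
/- Let a, b, c ∈ ℝ and n ≥ 1 an integer, and let T = {a^{s₁} b^{s₂} c^{s₃} : s₁, s₂, s₃ ∈ ℤ, 0 ≤ s_i ≤ n−1}. Then the union a·T ∪ b·T ∪ c·T is contained in the set T' = {a^{s₁} b^{s₂} c^{s₃} : 0 ≤ s_i ≤ n}, so the number of distinct received directions at the second receiver is at most (n+1)³. Moreover, if a, b, c are algebraically independent over ℚ, then T has exactly n³ elements; hence the alignment efficiency satisfies |T| / |T'| ≥ (n/(n+1))³. -/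
/-!
Multiplying a monomial by one of the generators raises one exponent by one, so exponents
below `n` become exponents at most `n`. Algebraic independence makes the map from exponent
vectors to monomials injective (distinct monomials are distinct polynomials), so `T` has as
many elements as the box `{0, …, n-1}³`, while `T'` has at most as many as `{0, …, n}³`.
-/

open Finset

lemma setOf_forall_le_eq {σ : Type*} (n : ℕ) :
    {s : σ → ℕ | ∀ i, s i ≤ n} = {s | ∀ i, s i < n + 1} := by
  simp only [Nat.lt_succ_iff]

section Monomials

variable {σ R : Type*} [Fintype σ]

lemma ncard_setOf_forall_lt (n : ℕ) :
    {s : σ → ℕ | ∀ i, s i < n}.ncard = n ^ Fintype.card σ := by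
  classical
  have : {s : σ → ℕ | ∀ i, s i < n} = ↑(Fintype.piFinset fun _ : σ => range n) := by
    ext s; simp
  rw [this, Set.ncard_coe_finset, Fintype.card_piFinset]
  simp

lemma finite_setOf_forall_le (n : ℕ) : {s : σ → ℕ | ∀ i, s i ≤ n}.Finite :=
  Set.finite_of_ncard_pos <| by
    rw [setOf_forall_le_eq, ncard_setOf_forall_lt]
    positivity

lemma ncard_image_setOf_forall_le_le {α : Type*} (f : (σ → ℕ) → α) (n : ℕ) :
    (f '' {s | ∀ i, s i ≤ n}).ncard ≤ (n + 1) ^ Fintype.card σ :=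
  (Set.ncard_image_le (finite_setOf_forall_le n)).trans_eq <| by
    rw [setOf_forall_le_eq, ncard_setOf_forall_lt]

lemma ncard_image_setOf_forall_le_pos {α : Type*} (f : (σ → ℕ) → α) (n : ℕ) :
    0 < (f '' {s | ∀ i, s i ≤ n}).ncard :=
  (Set.ncard_pos ((finite_setOf_forall_le n).image f)).mpr ⟨f 0, 0, fun _ => Nat.zero_le n, rfl⟩

lemma prod_pow_add_single [CommMonoid R] [DecidableEq σ] (x : σ → R) (s : σ → ℕ) (j : σ) :
    ∏ i, x i ^ (s + Pi.single j 1 : σ → ℕ) i = x j * ∏ i, x i ^ s i := by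
  simp only [Pi.add_apply, pow_add, prod_mul_distrib, mul_comm (x j)]
  congr 1
  rw [Fintype.prod_eq_single j fun i hi => by rw [Pi.single_eq_of_ne hi, pow_zero]]
  simp

lemma mul_image_prod_pow_subset [CommMonoid R] (x : σ → R) (n : ℕ) (j : σ) :
    (x j * ·) '' ((fun s : σ → ℕ => ∏ i, x i ^ s i) '' {s | ∀ i, s i < n}) ⊆
      (fun s : σ → ℕ => ∏ i, x i ^ s i) '' {s | ∀ i, s i ≤ n} := by
  classical
  rintro _ ⟨_, ⟨s, hs, rfl⟩, rfl⟩
  refine ⟨(s + Pi.single j 1 : σ → ℕ), fun i => ?_, prod_pow_add_single x s j⟩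
  rcases eq_or_ne i j with rfl | hij
  · simpa using hs i
  · simpa [Pi.single_eq_of_ne hij] using (hs i).le

lemma AlgebraicIndependent.injective_prod_pow {K : Type*} [CommRing K] [Nontrivial K]
    [CommRing R] [Algebra K R] {x : σ → R} (hx : AlgebraicIndependent K x) :
    Function.Injective fun s : σ → ℕ => ∏ i, x i ^ s i := by
  have aeval_monomial_one (s : σ → ℕ) :
      MvPolynomial.aeval x (MvPolynomial.monomial (Finsupp.equivFunOnFinite.symm s) (1 : K)) =
        ∏ i, x i ^ s i := by
    rw [MvPolynomial.aeval_monomial, Finsupp.prod_fintype _ _ fun _ => pow_zero _]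
    simp
  intro s t hst
  have monomial_eq :=
    hx.eq_iff.mp ((aeval_monomial_one s).trans (hst.trans (aeval_monomial_one t).symm))
  exact Finsupp.equivFunOnFinite.symm.injective
    (MvPolynomial.monomial_left_injective one_ne_zero monomial_eq)

end Monomials

theorem partial_alignment_efficiency_general (a b c : ℝ) (n : ℕ)
    (T T' : Set ℝ)
    (hT : T = (fun s : Fin 3 → ℕ => a ^ s 0 * b ^ s 1 * c ^ s 2) '' {s | ∀ i, s i < n})
    (hT' : T' = (fun s : Fin 3 → ℕ => a ^ s 0 * b ^ s 1 * c ^ s 2) '' {s | ∀ i, s i ≤ n}) :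
    ((a * ·) '' T ∪ (b * ·) '' T ∪ (c * ·) '' T ⊆ T' ∧ T'.ncard ≤ (n + 1) ^ 3) ∧
    (AlgebraicIndependent ℚ ![a, b, c] →
      T.ncard = n ^ 3 ∧ ((n : ℝ) / (n + 1)) ^ 3 ≤ (T.ncard : ℝ) / (T'.ncard : ℝ)) := by
  set m : (Fin 3 → ℕ) → ℝ := fun s => ∏ i, ![a, b, c] i ^ s i
  have monomial_eq : (fun s : Fin 3 → ℕ => a ^ s 0 * b ^ s 1 * c ^ s 2) = m := by
    funext s
    simp [m, Fin.prod_univ_three]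
  rw [monomial_eq] at hT hT'
  subst hT hT'
  have hT'_card := ncard_image_setOf_forall_le_le m n
  have hT'_pos := ncard_image_setOf_forall_le_pos m n
  refine ⟨⟨Set.union_subset (Set.union_subset (mul_image_prod_pow_subset _ n 0)
    (mul_image_prod_pow_subset _ n 1)) (mul_image_prod_pow_subset _ n 2), hT'_card⟩, fun hx => ?_⟩
  have hT_card : (m '' {s | ∀ i, s i < n}).ncard = n ^ 3 :=
    (Set.ncard_image_of_injective _ hx.injective_prod_pow).trans (ncard_setOf_forall_lt n)
  refine ⟨hT_card, ?_⟩
  rw [hT_card, div_pow, Nat.cast_pow]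
  exact div_le_div_of_nonneg_left (by positivity) (by exact_mod_cast hT'_pos)
    (by exact_mod_cast hT'_card)

/-- Partial alignment at two receivers: with `T = {a^{s₁}b^{s₂}c^{s₃} : 0 ≤ sᵢ ≤ n−1}`
and `T' = {a^{s₁}b^{s₂}c^{s₃} : 0 ≤ sᵢ ≤ n}`, the union `a·T ∪ b·T ∪ c·T` is contained
in `T'`, so the received directions at the second receiver number at most `(n+1)³`;
moreover if `a, b, c` are algebraically independent over `ℚ` then `|T| = n³` and the
alignment efficiency satisfies `|T|/|T'| ≥ (n/(n+1))³`. -/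
theorem partial_alignment_efficiency (a b c : ℝ) (n : ℕ) (hn : 1 ≤ n)
    (T T' : Set ℝ)
    (hT : T = (fun s : Fin 3 → ℕ => a ^ s 0 * b ^ s 1 * c ^ s 2) '' {s | ∀ i, s i < n})
    (hT' : T' = (fun s : Fin 3 → ℕ => a ^ s 0 * b ^ s 1 * c ^ s 2) '' {s | ∀ i, s i ≤ n}) :
    ((a * ·) '' T ∪ (b * ·) '' T ∪ (c * ·) '' T ⊆ T' ∧ T'.ncard ≤ (n + 1) ^ 3) ∧
    (AlgebraicIndependent ℚ ![a, b, c] →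
      T.ncard = n ^ 3 ∧ ((n : ℝ) / (n + 1)) ^ 3 ≤ (T.ncard : ℝ) / (T'.ncard : ℝ)) :=
  partial_alignment_efficiency_general a b c n T T' hT hT'
end

section
/- Let K ≥ 2 and n ≥ 1 be integers, and let all K² channel gains (h_{jl})_{j,l∈{1,…,K}} be algebraically independent over ℚ. With T_i the set of products ∏_{j≠l} h_{jl}^{s_{jl}} satisfying 0 ≤ s_{ji} ≤ n−1 for j ≠ i and 0 ≤ s_{jl} ≤ n otherwise (off-diagonal pairs only), and T_r the set of products ∏_{j≠l} h_{jl}^{s_{jl}} with 0 ≤ s_{jl} ≤ n, the sets h_{ii}·T_i and T_r are disjoint, and moreover the union (h_{ii}·T_i) ∪ T_r is a set of pairwise distinct real numbers that are linearly independent over ℚ. -/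
/-!
Algebraic independence of the gains over `ℚ` makes distinct monomials in them `ℚ`-linearly
independent. Every element of `h_{ii}·T_i` is a monomial with exponent `1` on the diagonal
gain `h_{ii}`, and every element of `T_r` one with exponent `0` there, so the two sets are
images of disjoint sets of exponent vectors under the injective monomial map.
-/

open Function

theorem AlgebraicIndependent.linearIndependent_prod_pow {ι R A : Type*} [Fintype ι]
    [CommRing R] [CommRing A] [Algebra R A] {x : ι → A} (hx : AlgebraicIndependent R x) :
    LinearIndependent R (fun e : ι → ℕ => ∏ j, x j ^ e j) := by
  have hmap := (MvPolynomial.basisMonomials ι R).linearIndependent.map'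
    (MvPolynomial.aeval x).toLinearMap (LinearMap.ker_eq_bot.mpr hx)
  have hmono : (fun e : ι → ℕ => ∏ j, x j ^ e j) = (MvPolynomial.aeval x).toLinearMap ∘
      MvPolynomial.basisMonomials ι R ∘ Finsupp.equivFunOnFinite.symm := by
    funext e
    simp [MvPolynomial.coe_basisMonomials, MvPolynomial.aeval_monomial,
      Finsupp.prod_fintype _ _ (fun j => pow_zero (x j))]
  rw [hmono]
  exact hmap.comp _ Finsupp.equivFunOnFinite.symm.injective

section ExtendExponents

variable {ι M : Type*} {P : ι → Prop} (s : {q // P q} → ℕ)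

theorem extend_subtype_val_zero_apply_of_not {q : ι} (hq : ¬P q) :
    extend Subtype.val s (0 : ι → ℕ) q = 0 :=
  extend_apply' _ _ _ fun ⟨p, hp⟩ => hq (hp ▸ p.2)

variable [Fintype ι] [DecidablePred P] [CommMonoid M] (x : ι → M)

theorem prod_pow_extend_zero :
    ∏ q, x q ^ extend Subtype.val s (0 : ι → ℕ) q = ∏ p : {q // P q}, x p ^ s p := by
  rw [← Fintype.prod_subtype_mul_prod_subtype P]
  have hout (q : {q // ¬P q}) : x q ^ extend Subtype.val s (0 : ι → ℕ) q = 1 := by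
    rw [extend_subtype_val_zero_apply_of_not s q.2, pow_zero]
  simp only [Subtype.val_injective.extend_apply, hout, Finset.prod_const_one, mul_one]

theorem mul_prod_pow_eq_prod_pow_extend_add_single [DecidableEq ι] (d : ι) :
    x d * ∏ p : {q // P q}, x p ^ s p =
      ∏ q, x q ^ (extend Subtype.val s 0 + Pi.single d 1 : ι → ℕ) q := by
  have hsingle : ∏ q, x q ^ (Pi.single d 1 : ι → ℕ) q = x d := by
    rw [Fintype.prod_eq_single d fun q hq => by rw [Pi.single_eq_of_ne hq, pow_zero],
      Pi.single_eq_same, pow_one]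
  simp only [Pi.add_apply, pow_add, Finset.prod_mul_distrib, hsingle, prod_pow_extend_zero,
    mul_comm]

end ExtendExponents

theorem disjoint_and_linearIndependent_mul_monomials {ι R A : Type*} [Fintype ι]
    [CommRing R] [Nontrivial R] [CommRing A] [Algebra R A] {x : ι → A}
    (hx : AlgebraicIndependent R x) {P : ι → Prop} [DecidablePred P] {d : ι} (hd : ¬P d)
    (S S' : Set ({q // P q} → ℕ)) :
    let T := (fun s => ∏ p : {q // P q}, x p ^ s p) '' S
    let T' := (fun s => ∏ p : {q // P q}, x p ^ s p) '' S'
    Disjoint ((x d * ·) '' T) T' ∧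
      LinearIndependent R (fun a : ((x d * ·) '' T ∪ T' : Set A) => (a : A)) := by
  classical
  intro T T'
  set mono : (ι → ℕ) → A := fun e => ∏ q, x q ^ e q
  have hli : LinearIndependent R mono := hx.linearIndependent_prod_pow
  have hsignal : (x d * ·) '' T = mono '' ((fun s : {q // P q} → ℕ =>
      (extend Subtype.val s 0 + Pi.single d 1 : ι → ℕ)) '' S) := by
    simp only [T, mono, Set.image_image, mul_prod_pow_eq_prod_pow_extend_add_single]
  have hinterf : T' = mono '' ((fun s : {q // P q} → ℕ =>
      extend Subtype.val s (0 : ι → ℕ)) '' S') := by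
    simp only [T', mono, Set.image_image, prod_pow_extend_zero]
  rw [hsignal, hinterf]
  refine ⟨(Set.disjoint_image_iff hli.injective).mpr ?_, ?_⟩
  · rw [Set.disjoint_left]
    rintro _ ⟨s, -, rfl⟩ ⟨s', -, hs'⟩
    simpa [extend_subtype_val_zero_apply_of_not _ hd] using congrFun hs' d
  · refine (hli.linearIndepOn_id.mono ?_).linearIndependent
    exact Set.union_subset (Set.image_subset_range _ _) (Set.image_subset_range _ _)

theorem signal_interference_separable_general (K n : ℕ)
    (h : Fin K → Fin K → ℝ)
    (halg : AlgebraicIndependent ℚ (fun p : Fin K × Fin K => h p.1 p.2))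
    (i : Fin K) (Ti Tr : Set ℝ)
    (hTi : Ti = (fun s : {p : Fin K × Fin K // p.1 ≠ p.2} → ℕ =>
        ∏ p, h p.1.1 p.1.2 ^ s p) ''
      {s | ∀ p : {p : Fin K × Fin K // p.1 ≠ p.2},
        (p.1.2 = i → s p < n) ∧ (p.1.2 ≠ i → s p ≤ n)})
    (hTr : Tr = (fun s : {p : Fin K × Fin K // p.1 ≠ p.2} → ℕ =>
        ∏ p, h p.1.1 p.1.2 ^ s p) ''
      {s | ∀ p : {p : Fin K × Fin K // p.1 ≠ p.2}, s p ≤ n}) :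
    Disjoint ((h i i * ·) '' Ti) Tr ∧
    LinearIndependent ℚ (fun x : ((h i i * ·) '' Ti ∪ Tr : Set ℝ) => (x : ℝ)) := by
  subst hTi hTr
  exact disjoint_and_linearIndependent_mul_monomials halg (d := (i, i)) (not_not.mpr rfl) _ _

/-- Separability of signal and interference in the `K`-user GIC: with all `K²` channel
gains algebraically independent over `ℚ`, the received signal directions `h_{ii}·T_i`
and the interference directions `T_r` are disjoint, and their union consists of reals
linearly independent over `ℚ`. -/
theorem signal_interference_separable (K n : ℕ) (hK : 2 ≤ K) (hn : 1 ≤ n)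
    (h : Fin K → Fin K → ℝ)
    (halg : AlgebraicIndependent ℚ (fun p : Fin K × Fin K => h p.1 p.2))
    (i : Fin K) (Ti Tr : Set ℝ)
    (hTi : Ti = (fun s : {p : Fin K × Fin K // p.1 ≠ p.2} → ℕ =>
        ∏ p, h p.1.1 p.1.2 ^ s p) ''
      {s | ∀ p : {p : Fin K × Fin K // p.1 ≠ p.2},
        (p.1.2 = i → s p < n) ∧ (p.1.2 ≠ i → s p ≤ n)})
    (hTr : Tr = (fun s : {p : Fin K × Fin K // p.1 ≠ p.2} → ℕ =>
        ∏ p, h p.1.1 p.1.2 ^ s p) ''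
      {s | ∀ p : {p : Fin K × Fin K // p.1 ≠ p.2}, s p ≤ n}) :
    Disjoint ((h i i * ·) '' Ti) Tr ∧
    LinearIndependent ℚ (fun x : ((h i i * ·) '' Ti ∪ Tr : Set ℝ) => (x : ℝ)) :=
  signal_interference_separable_general K n h halg i Ti Tr hTi hTr
end
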